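/- For ℓ > 0, the function h : [0,∞) → [0,∞) defined by h(s) = s² for s ≤ ℓ/2 and h(s) = ℓ s − ℓ²/4 for s ≥ ℓ/2 is the convex envelope of s ↦ min(s², ℓ s) on [0,∞): h is convex, h(s) ≤ min(s², ℓ s) for all s ≥ 0, and every convex function φ : [0,∞) → ℝ with φ(s) ≤ min(s², ℓ s) for all s ≥ 0 satisfies φ ≤ h. -/

import Mathlib

open Set

/-- The volume energy density `h(s) = s²` for `s ≤ ℓ/2`, `h(s) = ℓ s − ℓ²/4` for
`s ≥ ℓ/2`. -/
noncomputable def volDensity (l s : ℝ) : ℝ :=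
  if s ≤ l / 2 then s ^ 2 else l * s - l ^ 2 / 4

lemma volDensity_hasDerivAt (l : ℝ) (s : ℝ) :
    HasDerivAt (volDensity l) (if s ≤ l / 2 then 2 * s else l) s := by
  rcases lt_trichotomy s (l / 2) with h | h | h
  · rw [if_pos h.le]
    have hsq : HasDerivAt (fun x : ℝ => x ^ 2) (2 * s) s := by
      simpa using hasDerivAt_pow 2 s
    apply hsq.congr_of_eventuallyEq
    filter_upwards [Iio_mem_nhds h] with x hx
    simp [volDensity, (mem_Iio.mp hx).le]
  · subst h
    rw [if_pos le_rfl]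
    have h1 : HasDerivWithinAt (volDensity l) (2 * (l / 2)) (Iic (l / 2)) (l / 2) := by
      have hsq : HasDerivAt (fun x : ℝ => x ^ 2) (2 * (l / 2)) (l / 2) := by
        simpa using hasDerivAt_pow 2 (l / 2)
      exact (hsq.hasDerivWithinAt).congr (fun y hy => by simp [volDensity, mem_Iic.mp hy])
        (by simp [volDensity])
    have h2 : HasDerivWithinAt (volDensity l) (2 * (l / 2)) (Ici (l / 2)) (l / 2) := by
      have hlin : HasDerivAt (fun x : ℝ => l * x - l ^ 2 / 4) (2 * (l / 2)) (l / 2) := by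
        have := ((hasDerivAt_id (l / 2)).const_mul l).sub_const (l ^ 2 / 4)
        simpa using this.congr_deriv (by ring)
      refine (hlin.hasDerivWithinAt).congr (fun y hy => ?_) (by simp [volDensity]; ring)
      rcases eq_or_lt_of_le (mem_Ici.mp hy) with h' | h'
      · simp [volDensity, ← h']; ring
      · simp [volDensity, not_le.mpr h']
    have := h1.union h2
    rw [Iic_union_Ici, hasDerivWithinAt_univ] at this
    exact this
  · rw [if_neg (not_le.mpr h)]
    have hlin : HasDerivAt (fun x : ℝ => l * x - l ^ 2 / 4) l s := by
      have := ((hasDerivAt_id s).const_mul l).sub_const (l ^ 2 / 4)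
      simpa using this
    apply hlin.congr_of_eventuallyEq
    filter_upwards [Ioi_mem_nhds h] with x hx
    simp [volDensity, not_le.mpr (mem_Ioi.mp hx)]

/-- For `ℓ > 0`, the function `h` is the convex envelope of
`s ↦ min(s², ℓ s)` on `[0,∞)`: `h` is convex on `[0,∞)`, `h(s) ≤ min(s², ℓ s)` for
all `s ≥ 0`, and every convex `φ` on `[0,∞)` with `φ ≤ min(s², ℓ s)` there satisfies
`φ ≤ h` on `[0,∞)`. -/
theorem volDensity_convex_envelope (l : ℝ) (hl : 0 < l) :
    ConvexOn ℝ (Set.Ici 0) (volDensity l) ∧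
    (∀ s : ℝ, 0 ≤ s → volDensity l s ≤ min (s ^ 2) (l * s)) ∧
    (∀ φ : ℝ → ℝ, ConvexOn ℝ (Set.Ici 0) φ →
      (∀ s : ℝ, 0 ≤ s → φ s ≤ min (s ^ 2) (l * s)) →
      ∀ s : ℝ, 0 ≤ s → φ s ≤ volDensity l s) := by
  have hdiff : Differentiable ℝ (volDensity l) :=
    fun s => (volDensity_hasDerivAt l s).differentiableAt
  have hderiv : ∀ s : ℝ, deriv (volDensity l) s = if s ≤ l / 2 then 2 * s else l :=
    fun s => (volDensity_hasDerivAt l s).deriv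
  refine ⟨?_, ?_, ?_⟩
  · apply MonotoneOn.convexOn_of_deriv (convex_Ici 0) hdiff.continuous.continuousOn
      hdiff.differentiableOn
    intro x hx y hy hxy
    rw [hderiv, hderiv]
    rw [interior_Ici] at hx hy
    split_ifs with h1 h2 h2 <;> linarith [mem_Ioi.mp hx, mem_Ioi.mp hy]
  · intro s hs
    unfold volDensity
    split_ifs with h
    · exact le_min le_rfl (by nlinarith)
    · push_neg at h
      exact le_min (by nlinarith) (by nlinarith)
  · intro φ hφ hle s hs
    rcases le_or_gt s (l / 2) with h | h
    · calc φ s ≤ min (s ^ 2) (l * s) := hle s hs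
        _ ≤ s ^ 2 := min_le_left _ _
        _ = volDensity l s := by simp [volDensity, h]
    · rw [show volDensity l s = l * s - l ^ 2 / 4 by simp [volDensity, not_le.mpr h]]
      refine le_of_forall_pos_le_add fun ε hε => ?_
      set M : ℝ := max 1 (l ^ 2 / (4 * ε)) with hM
      have hM1 : (1 : ℝ) ≤ M := le_max_left _ _
      have hM0 : (0 : ℝ) < M := by linarith
      set b : ℝ := l / 2 + (s - l / 2) * M with hb
      have hsl : 0 < s - l / 2 := by linarith
      have hbs : s ≤ b := by
        rw [hb]; nlinarith [mul_le_mul_of_nonneg_left hM1 hsl.le]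
      have hb0 : (0 : ℝ) ≤ b := le_trans hs hbs
      set t : ℝ := 1 / M with ht
      have ht0 : 0 < t := by positivity
      have ht1 : t ≤ 1 := by rw [ht]; rw [div_le_one hM0]; exact hM1
      have hcomb : s = (1 - t) * (l / 2) + t * b := by
        rw [hb, ht]; field_simp
        ring
      have key := hφ.2 (mem_Ici.mpr (by linarith : (0:ℝ) ≤ l / 2)) (mem_Ici.mpr hb0)
        (by linarith : (0:ℝ) ≤ 1 - t) ht0.le (by ring)
      rw [smul_eq_mul, smul_eq_mul, smul_eq_mul, smul_eq_mul, ← hcomb] at key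
      have hφa : φ (l / 2) ≤ l ^ 2 / 4 := by
        have := hle (l / 2) (by linarith)
        have h2 : min ((l / 2) ^ 2) (l * (l / 2)) = l ^ 2 / 4 := by
          rw [min_eq_left (by nlinarith)]; ring
        linarith [this.trans_eq h2]
      have hφb : φ b ≤ l * b := (hle b hb0).trans (min_le_right _ _)
      have htb : t * b = t * (l / 2) + (s - l / 2) := by
        rw [ht, hb]; field_simp
      have hεM : t * (l ^ 2 / 4) ≤ ε := by
        have h4 : l ^ 2 ≤ M * (4 * ε) := (div_le_iff₀ (by positivity)).mp (le_max_right _ _)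
        rw [ht, div_mul_eq_mul_div, one_mul, div_le_iff₀ hM0]
        nlinarith
      calc φ s ≤ (1 - t) * φ (l / 2) + t * φ b := key
        _ ≤ (1 - t) * (l ^ 2 / 4) + t * (l * b) := by
            have h1 : (1 - t) * φ (l / 2) ≤ (1 - t) * (l ^ 2 / 4) :=
              mul_le_mul_of_nonneg_left hφa (by linarith)
            have h2 : t * φ b ≤ t * (l * b) := mul_le_mul_of_nonneg_left hφb ht0.le
            exact add_le_add h1 h2
        _ = l * s - l ^ 2 / 4 + t * (l ^ 2 / 4) := by
            rw [show t * (l * b) = l * (t * b) by ring, htb]; ring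
        _ ≤ l * s - l ^ 2 / 4 + ε := by linarith
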